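/- arXiv:2203.02968 — 2 statements merged into one kernel-verified Lean document; each statement's English description precedes it below -/
import Mathlib

section
/- Let T be a decision tree whose root is an internal node, and let T_L and T_R be the subtrees rooted at the two children of the root. Then OPT_T ≥ (OPT_{T_L} + OPT_{T_R} + sqrt((OPT_{T_L} − OPT_{T_R})² + 4)) / 2. -/
/-- A deterministic decision tree over `{0,1}^n`: every internal node is labeled
by a query index `i ∈ Fin n` and has exactly two children (a 0-child and a
1-child); every leaf is labeled by an output value. -/
inductive DTree (n : ℕ) : Type where
  | leaf (b : Bool) : DTree n
  | node (i : Fin n) (t0 t1 : DTree n) : DTree n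

namespace DTree

/-- On input `x`, from each internal node labeled `i` follow the edge to the
`x i`-child; output the label of the leaf reached. -/
def eval {n : ℕ} : DTree n → (Fin n → Bool) → Bool
  | leaf b, _ => b
  | node i t0 t1, x => if x i then t1.eval x else t0.eval x

/-- `DTSize`: the total number of nodes of the tree. -/
def size {n : ℕ} : DTree n → ℕ
  | leaf _ => 1
  | node _ t0 t1 => 1 + t0.size + t1.size

/-- The depth: the maximum number of edges on a root-to-leaf path. -/
def depth {n : ℕ} : DTree n → ℕ
  | leaf _ => 0
  | node _ t0 t1 => 1 + max t0.depth t1.depth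

/-- The rank of a binary tree: a leaf has rank 0; an internal node whose two
children have ranks `r₁, r₂` has rank `max r₁ r₂` if `r₁ ≠ r₂`, and `r₁ + 1`
if `r₁ = r₂`. -/
def rank {n : ℕ} : DTree n → ℕ
  | leaf _ => 0
  | node _ t0 t1 => if t0.rank = t1.rank then t0.rank + 1 else max t0.rank t1.rank

end DTree

/-- The decision tree `t` computes the total Boolean function `f`. -/
def ComputesFn {n : ℕ} (t : DTree n) (f : (Fin n → Bool) → Bool) : Prop :=
  ∀ x, t.eval x = f x

/-- An assignment of one real weight to each edge of a binary tree, recorded as a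
tree of the same shape: at every internal node, `w0` is the weight of the edge to
the 0-child and `w1` the weight of the edge to the 1-child. -/
inductive WTree : Type where
  | leaf : WTree
  | node (w0 w1 : ℝ) (c0 c1 : WTree) : WTree

namespace WTree

/-- All weights are strictly positive. -/
def Pos : WTree → Prop
  | leaf => True
  | node w0 w1 c0 c1 => 0 < w0 ∧ 0 < w1 ∧ c0.Pos ∧ c1.Pos

/-- `max_{P ∈ P(T)} Σ_{e ∈ P} 1 / W_e`: the maximum over root-to-leaf paths `P`
of the sum of the inverse weights of the edges along `P`. -/
noncomputable def pathCost : WTree → ℝ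
  | leaf => 0
  | node w0 w1 c0 c1 => max (1 / w0 + c0.pathCost) (1 / w1 + c1.pathCost)

/-- `max_{P ∈ P(T)} Σ_{e ∈ P̄} W_e`: the maximum over root-to-leaf paths `P` of
the sum of the weights of the edges having exactly one endpoint on `P`
(i.e. at each internal node of `P`, the edge to the child off the path). -/
noncomputable def devCost : WTree → ℝ
  | leaf => 0
  | node w0 w1 c0 c1 => max (w1 + c0.devCost) (w0 + c1.devCost)

end WTree

/-- The weight assignment `w` has the same shape as the decision tree `t`
(i.e. it assigns a weight to each edge of `t`). -/
def MatchesW {n : ℕ} : DTree n → WTree → Prop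
  | DTree.leaf _, WTree.leaf => True
  | DTree.node _ t0 t1, WTree.node _ _ c0 c1 => MatchesW t0 c0 ∧ MatchesW t1 c1
  | _, _ => False

/-- `OPT_T`: the infimum, over all positive weight assignments `W` to the edges
of `T`, of `sqrt((max_{P} Σ_{e∈P̄} W_e) · (max_{P} Σ_{e∈P} 1/W_e))`.
For a single leaf this is `0`. -/
noncomputable def OPT {n : ℕ} (t : DTree n) : ℝ :=
  sInf {v : ℝ | ∃ w : WTree, MatchesW t w ∧ w.Pos ∧
    v = Real.sqrt (w.devCost * w.pathCost)}

/-!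
Fix positive weights `W` on `node i T_L T_R`; let `d, p` be the two maxima defining its value
`V = √(dp)`, and `D₀, P₀` and `D₁, P₁` those of the restrictions to `T_L` and `T_R`, whose
values `A = √(D₀P₀)` and `B = √(D₁P₁)` bound `OPT_{T_L}` and `OPT_{T_R}` from above.
Cauchy–Schwarz, `√(D₀P₀) + √((d - D₀)(p - P₀)) ≤ √(dp)`, gives
`(V - A)² ≥ (d - D₀)(p - P₀)`, and likewise for `B`. Regrouping the four factors of the product of these lower bounds as
`((d - D₀)(p - P₁)) ((d - D₁)(p - P₀))`, each pair is at least `W₁ · 1/W₁ = 1` and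
`W₀ · 1/W₀ = 1` respectively, so `(V - A)(V - B) ≥ 1`. Hence `V` is at least the larger root
of `(x - A)(x - B) = 1`, which dominates the larger root of `(x - OPT_{T_L})(x - OPT_{T_R}) = 1`.
-/

open Real

theorem Real.sqrt_mul_add_sqrt_mul_le {a b c d : ℝ} (ha : 0 ≤ a) (hb : 0 ≤ b) (hc : 0 ≤ c)
    (hd : 0 ≤ d) : √(a * b) + √(c * d) ≤ √((a + c) * (b + d)) := by
  have hcross : √(a * b) * √(c * d) = √(a * d) * √(c * b) := by
    rw [← sqrt_mul (by positivity), ← sqrt_mul (by positivity)]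
    ring_nf
  apply le_sqrt_of_sq_le
  nlinarith [sq_sqrt (mul_nonneg ha hb), sq_sqrt (mul_nonneg hc hd),
    sq_sqrt (mul_nonneg ha hd), sq_sqrt (mul_nonneg hc hb), sq_nonneg (√(a * d) - √(c * b))]

theorem Real.sqrt_sub_mul_sub_le {D P d p : ℝ} (hD : 0 ≤ D) (hP : 0 ≤ P) (hDd : D ≤ d)
    (hPp : P ≤ p) : √((d - D) * (p - P)) ≤ √(d * p) - √(D * P) := by
  have := sqrt_mul_add_sqrt_mul_le hD hP (sub_nonneg.2 hDd) (sub_nonneg.2 hPp)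
  simp only [add_sub_cancel] at this
  linarith

/-- `(a + b + √((a - b)² + 4)) / 2` is the larger root of `(x - a)(x - b) = 1`. -/
theorem Real.add_add_sqrt_div_two_le {a b A B V : ℝ} (ha : a ≤ A) (hb : b ≤ B) (hAV : A ≤ V)
    (hBV : B ≤ V) (h : 1 ≤ (V - A) * (V - B)) :
    (a + b + √((a - b) ^ 2 + 4)) / 2 ≤ V := by
  have hmono : (V - A) * (V - B) ≤ (V - a) * (V - b) :=
    mul_le_mul (by linarith) (by linarith) (by linarith) (by linarith)
  have hsq : (a - b) ^ 2 + 4 ≤ (2 * V - a - b) ^ 2 := by nlinarith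
  have := sqrt_le_sqrt hsq
  rw [sqrt_sq (by linarith)] at this
  linarith

namespace WTree

noncomputable def value (w : WTree) : ℝ := √(w.devCost * w.pathCost)

theorem devCost_nonneg : ∀ {w : WTree}, w.Pos → 0 ≤ w.devCost
  | leaf, _ => le_rfl
  | node _ _ _ _, ⟨_, hw₁, hc₀, _⟩ =>
    le_max_of_le_left (add_nonneg hw₁.le (devCost_nonneg hc₀))

theorem pathCost_nonneg : ∀ {w : WTree}, w.Pos → 0 ≤ w.pathCost
  | leaf, _ => le_rfl
  | node _ _ _ _, ⟨hw₀, _, hc₀, _⟩ =>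
    le_max_of_le_left (add_nonneg (one_div_pos.2 hw₀).le (pathCost_nonneg hc₀))

theorem one_le_value_sub_mul_value_sub {w₀ w₁ : ℝ} {c₀ c₁ : WTree}
    (hw : (node w₀ w₁ c₀ c₁).Pos) :
    c₀.value ≤ (node w₀ w₁ c₀ c₁).value ∧ c₁.value ≤ (node w₀ w₁ c₀ c₁).value ∧
      1 ≤ ((node w₀ w₁ c₀ c₁).value - c₀.value) *
        ((node w₀ w₁ c₀ c₁).value - c₁.value) := by
  obtain ⟨hw₀, hw₁, hc₀, hc₁⟩ := hw
  set d := (node w₀ w₁ c₀ c₁).devCost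
  set p := (node w₀ w₁ c₀ c₁).pathCost
  set D₀ := c₀.devCost
  set P₀ := c₀.pathCost
  set D₁ := c₁.devCost
  set P₁ := c₁.pathCost
  have hd₀ : w₁ + D₀ ≤ d := le_max_left _ _
  have hd₁ : w₀ + D₁ ≤ d := le_max_right _ _
  have hp₀ : 1 / w₀ + P₀ ≤ p := le_max_left _ _
  have hp₁ : 1 / w₁ + P₁ ≤ p := le_max_right _ _
  have hinv₀ := one_div_pos.2 hw₀
  have hinv₁ := one_div_pos.2 hw₁
  have hA : √((d - D₀) * (p - P₀)) ≤ (node w₀ w₁ c₀ c₁).value - c₀.value :=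
    sqrt_sub_mul_sub_le (devCost_nonneg hc₀) (pathCost_nonneg hc₀) (by linarith) (by linarith)
  have hB : √((d - D₁) * (p - P₁)) ≤ (node w₀ w₁ c₀ c₁).value - c₁.value :=
    sqrt_sub_mul_sub_le (devCost_nonneg hc₁) (pathCost_nonneg hc₁) (by linarith) (by linarith)
  refine ⟨by linarith [sqrt_nonneg ((d - D₀) * (p - P₀))],
    by linarith [sqrt_nonneg ((d - D₁) * (p - P₁))], ?_⟩
  have h₀₁ : 1 ≤ (d - D₀) * (p - P₁) :=
    calc (1 : ℝ) = w₁ * (1 / w₁) := (mul_one_div_cancel hw₁.ne').symm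
      _ ≤ _ := mul_le_mul (by linarith) (by linarith) hinv₁.le (by linarith)
  have h₁₀ : 1 ≤ (d - D₁) * (p - P₀) :=
    calc (1 : ℝ) = w₀ * (1 / w₀) := (mul_one_div_cancel hw₀.ne').symm
      _ ≤ _ := mul_le_mul (by linarith) (by linarith) hinv₀.le (by linarith)
  calc (1 : ℝ) ≤ √((d - D₀) * (p - P₁) * ((d - D₁) * (p - P₀))) :=
        one_le_sqrt.2 (one_le_mul_of_one_le_of_one_le h₀₁ h₁₀)
    _ = √((d - D₀) * (p - P₀)) * √((d - D₁) * (p - P₁)) := by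
      rw [← sqrt_mul (mul_nonneg (by linarith) (by linarith))]
      ring_nf
    _ ≤ _ := mul_le_mul hA hB (sqrt_nonneg _) (hA.trans' (sqrt_nonneg _))

end WTree

theorem exists_matchesW_pos {n : ℕ} : ∀ t : DTree n, ∃ w, MatchesW t w ∧ w.Pos
  | .leaf _ => ⟨.leaf, trivial, trivial⟩
  | .node _ t₀ t₁ =>
    have ⟨w₀, hm₀, hp₀⟩ := exists_matchesW_pos t₀
    have ⟨w₁, hm₁, hp₁⟩ := exists_matchesW_pos t₁
    ⟨.node 1 1 w₀ w₁, ⟨hm₀, hm₁⟩, one_pos, one_pos, hp₀, hp₁⟩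

theorem OPT_le_value {n : ℕ} {t : DTree n} {w : WTree} (hm : MatchesW t w) (hp : w.Pos) :
    OPT t ≤ w.value :=
  csInf_le ⟨0, by rintro _ ⟨_, _, _, rfl⟩; exact sqrt_nonneg _⟩ ⟨w, hm, hp, rfl⟩

/-- Let `T` be a decision tree whose root is an internal node,
with subtrees `T_L`, `T_R` rooted at the two children of the root. Then
`OPT_T ≥ (OPT_{T_L} + OPT_{T_R} + sqrt((OPT_{T_L} − OPT_{T_R})² + 4)) / 2`. -/
theorem OPT_node_ge {n : ℕ} (i : Fin n) (tL tR : DTree n) :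
    (OPT tL + OPT tR + Real.sqrt ((OPT tL - OPT tR) ^ 2 + 4)) / 2 ≤
      OPT (DTree.node i tL tR) := by
  obtain ⟨w, hm, hp⟩ := exists_matchesW_pos (DTree.node i tL tR)
  refine le_csInf ⟨_, w, hm, hp, rfl⟩ ?_
  rintro _ ⟨_ | ⟨w₀, w₁, c₀, c₁⟩, hm, hp, rfl⟩
  · exact hm.elim
  obtain ⟨hA, hB, h⟩ := WTree.one_le_value_sub_mul_value_sub hp
  exact add_add_sqrt_div_two_le (OPT_le_value hm.1 hp.2.2.1) (OPT_le_value hm.2 hp.2.2.2) hA hB h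
end

section
/- For every decision tree T, OPT_T ≤ 2 · sqrt( rank(T) · depth(T) ). -/
/-!
Put weight `B` on the edge to a child whose rank is strictly larger than its sibling's, and
weight `A` on every other edge. Following an edge of weight `A` the rank drops by at least one,
so a root-to-leaf path uses at most `rank T` of them, and `Σ_P 1/W ≤ rank/A + depth/B`.
Leaving a path through an edge of weight `B` means the path itself goes to the child of smaller
rank, which again happens at most `rank T` times, so `Σ_P̄ W ≤ depth·A + rank·B`.
Taking `A = rank T` and `B = depth T` makes both factors at most `2` and `2·rank·depth`.
-/

namespace DTree

variable {n : ℕ}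

lemma rank_node_comm (i : Fin n) (t0 t1 : DTree n) :
    (node i t0 t1).rank = (node i t1 t0).rank := by
  simp only [rank]; split_ifs <;> omega

lemma depth_node_comm (i : Fin n) (t0 t1 : DTree n) :
    (node i t0 t1).depth = (node i t1 t0).depth := by
  simp only [depth, max_comm]

lemma rank_left_le_node (i : Fin n) (t0 t1 : DTree n) : t0.rank ≤ (node i t0 t1).rank := by
  simp only [rank]; split_ifs <;> omega

lemma rank_left_lt_node_of_le {t0 t1 : DTree n} (i : Fin n) (h : t0.rank ≤ t1.rank) :
    t0.rank < (node i t0 t1).rank := by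
  simp only [rank]; split_ifs <;> omega

lemma depth_left_lt_node (i : Fin n) (t0 t1 : DTree n) : t0.depth < (node i t0 t1).depth := by
  simp only [depth]; omega

lemma rank_eq_zero_and_depth_eq_zero_or_pos (t : DTree n) :
    t.rank = 0 ∧ t.depth = 0 ∨ 0 < t.rank ∧ 0 < t.depth := by
  cases t with
  | leaf => exact Or.inl ⟨rfl, rfl⟩
  | node i t0 t1 => right; simp only [rank, depth]; split_ifs <;> omega

end DTree

/-- The weight of the edge to a child of rank `r` whose sibling has rank `s`. -/
def rankWeight (A B : ℝ) (r s : ℕ) : ℝ := if s < r then B else A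

lemma rankWeight_pos {A B : ℝ} (hA : 0 < A) (hB : 0 < B) (r s : ℕ) :
    0 < rankWeight A B r s := by
  unfold rankWeight; split_ifs <;> assumption

section Step

variable {A B : ℝ} (hA : 0 < A) (hB : 0 < B) {r s d R D : ℕ}
  (hr : r ≤ R) (hd : d < D) (hrs : r ≤ s → r < R)
include hA hB hr hd hrs

lemma inv_rankWeight_add_le :
    1 / rankWeight A B r s + (r / A + d / B) ≤ R / A + D / B := by
  have hd' : (d : ℝ) + 1 ≤ D := by exact_mod_cast hd
  unfold rankWeight
  split_ifs with hsr
  · have hr' : (r : ℝ) ≤ R := by exact_mod_cast hr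
    have hrA : (r : ℝ) / A ≤ R / A := by gcongr
    have hdB : ((d : ℝ) + 1) / B ≤ D / B := by gcongr
    rw [add_div] at hdB; linarith
  · have hr' : (r : ℝ) + 1 ≤ R := by exact_mod_cast hrs (not_lt.1 hsr)
    have hrA : ((r : ℝ) + 1) / A ≤ R / A := by gcongr
    have hd'' : (d : ℝ) ≤ D := by exact_mod_cast hd.le
    have hdB : (d : ℝ) / B ≤ D / B := by gcongr
    rw [add_div] at hrA; linarith

lemma rankWeight_sibling_add_le :
    rankWeight A B s r + (d * A + r * B) ≤ D * A + R * B := by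
  unfold rankWeight
  split_ifs with hrs'
  · have hr' : (r : ℝ) + 1 ≤ R := by exact_mod_cast hrs hrs'.le
    have hd' : (d : ℝ) ≤ D := by exact_mod_cast hd.le
    nlinarith
  · have hr' : (r : ℝ) ≤ R := by exact_mod_cast hr
    have hd' : (d : ℝ) + 1 ≤ D := by exact_mod_cast hd
    nlinarith

end Step

lemma WTree.pathCost_nonneg_s16 {w : WTree} (hw : w.Pos) : 0 ≤ w.pathCost := by
  induction w with
  | leaf => exact le_rfl
  | node w0 w1 c0 c1 ih0 _ =>
    obtain ⟨h0, -, hc0, -⟩ := hw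
    exact le_max_of_le_left (add_nonneg (one_div_pos.2 h0).le (ih0 hc0))

lemma OPT_le_sqrt {n : ℕ} {t : DTree n} {w : WTree} (ht : MatchesW t w) (hw : w.Pos) :
    OPT t ≤ Real.sqrt (w.devCost * w.pathCost) :=
  csInf_le ⟨0, by rintro v ⟨w', -, -, rfl⟩; exact Real.sqrt_nonneg _⟩ ⟨w, ht, hw, rfl⟩

namespace DTree

variable {n : ℕ}

def rankWeights (A B : ℝ) : DTree n → WTree
  | leaf _ => .leaf
  | node _ t0 t1 =>
    .node (rankWeight A B t0.rank t1.rank) (rankWeight A B t1.rank t0.rank)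
      (t0.rankWeights A B) (t1.rankWeights A B)

lemma matchesW_rankWeights (A B : ℝ) (t : DTree n) : MatchesW t (t.rankWeights A B) := by
  induction t with
  | leaf => trivial
  | node _ _ _ ih0 ih1 => exact ⟨ih0, ih1⟩

variable {A B : ℝ} (hA : 0 < A) (hB : 0 < B)
include hA hB

lemma rankWeights_pos (t : DTree n) : (t.rankWeights A B).Pos := by
  induction t with
  | leaf => trivial
  | node _ t0 t1 ih0 ih1 =>
    exact ⟨rankWeight_pos hA hB _ _, rankWeight_pos hA hB _ _, ih0, ih1⟩

lemma pathCost_rankWeights_le (t : DTree n) :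
    (t.rankWeights A B).pathCost ≤ t.rank / A + t.depth / B := by
  induction t with
  | leaf => simp [rankWeights, WTree.pathCost, rank, depth]
  | node i t0 t1 ih0 ih1 =>
    refine max_le ((add_le_add le_rfl ih0).trans ?_) ((add_le_add le_rfl ih1).trans ?_)
    · exact inv_rankWeight_add_le hA hB (rank_left_le_node i t0 t1)
        (depth_left_lt_node i t0 t1) (rank_left_lt_node_of_le i)
    · rw [rank_node_comm, depth_node_comm]
      exact inv_rankWeight_add_le hA hB (rank_left_le_node i t1 t0)
        (depth_left_lt_node i t1 t0) (rank_left_lt_node_of_le i)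

lemma devCost_rankWeights_le (t : DTree n) :
    (t.rankWeights A B).devCost ≤ t.depth * A + t.rank * B := by
  induction t with
  | leaf => simp [rankWeights, WTree.devCost, rank, depth]
  | node i t0 t1 ih0 ih1 =>
    refine max_le ((add_le_add le_rfl ih0).trans ?_) ((add_le_add le_rfl ih1).trans ?_)
    · exact rankWeight_sibling_add_le hA hB (rank_left_le_node i t0 t1)
        (depth_left_lt_node i t0 t1) (rank_left_lt_node_of_le i)
    · rw [rank_node_comm, depth_node_comm]
      exact rankWeight_sibling_add_le hA hB (rank_left_le_node i t1 t0)
        (depth_left_lt_node i t1 t0) (rank_left_lt_node_of_le i)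

lemma OPT_le_sqrt_rank_depth_weighted (t : DTree n) :
    OPT t ≤ Real.sqrt ((t.depth * A + t.rank * B) * (t.rank / A + t.depth / B)) := by
  refine (OPT_le_sqrt (t.matchesW_rankWeights A B) (t.rankWeights_pos hA hB)).trans ?_
  exact Real.sqrt_le_sqrt <| mul_le_mul (t.devCost_rankWeights_le hA hB)
    (t.pathCost_rankWeights_le hA hB) (WTree.pathCost_nonneg_s16 (t.rankWeights_pos hA hB))
    (by positivity)

end DTree

/-- For every decision tree `T`,
`OPT_T ≤ 2 · sqrt(rank(T) · depth(T))`. -/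
theorem OPT_le_two_sqrt_rank_depth {n : ℕ} (t : DTree n) :
    OPT t ≤ 2 * Real.sqrt ((t.rank : ℝ) * (t.depth : ℝ)) := by
  rcases t.rank_eq_zero_and_depth_eq_zero_or_pos with ⟨hr, hd⟩ | ⟨hr, hd⟩
  · simpa [hr, hd] using t.OPT_le_sqrt_rank_depth_weighted one_pos one_pos
  · have hr' : (0 : ℝ) < t.rank := by exact_mod_cast hr
    have hd' : (0 : ℝ) < t.depth := by exact_mod_cast hd
    have balance : ((t.depth : ℝ) * t.rank + t.rank * t.depth) *
        (t.rank / t.rank + t.depth / t.depth) = 2 ^ 2 * (t.rank * t.depth) := by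
      field_simp; ring
    calc OPT t ≤ Real.sqrt (2 ^ 2 * (t.rank * t.depth)) :=
          balance ▸ t.OPT_le_sqrt_rank_depth_weighted hr' hd'
      _ = 2 * Real.sqrt (t.rank * t.depth) := by
          rw [Real.sqrt_mul (by norm_num), Real.sqrt_sq zero_le_two]
end
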